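/- Let F ∈ ℂ[x_1,…,x_n] be a nonzero homogeneous form of degree d, let α ∈ T_1 be a linear form in the dual variables, and suppose F = c_1 ℓ_1^d + … + c_r ℓ_r^d where ℓ_1,…,ℓ_r are pairwise non-proportional nonzero linear forms and c_i ∈ ℂ. Then the number of indices i with α∘ℓ_i ≠ 0 is at least al(α∘F) − al(α²∘F); that is, at least al(α∘F) − al(α²∘F) of the points [ℓ_i] lie off the hyperplane defined by α. -/

import Mathlib

/-!
Put `G = α∘F`. A linear form `β` acts on a power of a linear form by `β∘ℓᵏ = k (β∘ℓ) ℓᵏ⁻¹`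
with `β∘ℓ` a scalar, so `G` and all its derivatives lie in the span `W` of the powers `ℓᵢᵏ`,
`k < d`, of those `ℓᵢ` with `α∘ℓᵢ ≠ 0`. As `Diff(α²∘F) = α(Diff(G))`, the difference
`al(G) − al(α∘G)` is the dimension of the kernel of `α` on `Diff(G) ⊆ W`, hence at most
`dim W − dim α(W)`. Finally `α(W)` contains every `ℓᵢᵏ` with `k < d − 1`, so
`W = α(W) + span {ℓᵢ^(d−1)}` and `dim W − dim α(W)` is at most the number of those `ℓᵢ`.
-/

open MvPolynomial

/-- The iterated partial derivative `∂^m` applied to `F`: on a monomial `x^k` it gives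
`(∏ᵢ kᵢ(kᵢ-1)⋯(kᵢ-mᵢ+1)) · x^(k-m)`, i.e. each dual variable `αᵢ` acts as `∂/∂xᵢ`. -/
noncomputable def mderiv {σ : Type*} (m : σ →₀ ℕ) (F : MvPolynomial σ ℂ) :
    MvPolynomial σ ℂ :=
  (AddMonoidAlgebra.coeff F).sum fun k c =>
    MvPolynomial.monomial (k - m) (c * ∏ i ∈ m.support, (Nat.descFactorial (k i) (m i) : ℂ))

/-- The apolarity action `Θ ∘ F` of a polynomial `Θ` in the dual variables on `F`,
as a constant-coefficient differential operator. -/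
noncomputable def diffOp {σ : Type*} (Θ F : MvPolynomial σ ℂ) : MvPolynomial σ ℂ :=
  (AddMonoidAlgebra.coeff Θ).sum fun m c => c • mderiv m F

/-- Apolar length `al F`: the dimension of the space `Diff(F) = {Θ ∘ F : Θ ∈ T}` of all
partial derivatives of `F` of all orders (including `F` itself). -/
noncomputable def apolarLength {σ : Type*} (F : MvPolynomial σ ℂ) : ℕ :=
  Module.finrank ℂ (Submodule.span ℂ (Set.range fun Θ => diffOp Θ F))

/-- The Hilbert function of the apolar algebra of `F`: the dimension of the span of the
`i`-th order partial derivatives `{Θ ∘ F : Θ homogeneous of degree i}`. -/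
noncomputable def hilbFn {σ : Type*} (F : MvPolynomial σ ℂ) (i : ℕ) : ℕ :=
  Module.finrank ℂ (Submodule.span ℂ
    {G : MvPolynomial σ ℂ | ∃ Θ : MvPolynomial σ ℂ, Θ.IsHomogeneous i ∧ diffOp Θ F = G})

/-- Waring rank of a degree-`d` form: the least `r` such that
`F = c₁ ℓ₁^d + ⋯ + c_r ℓ_r^d` for linear forms `ℓᵢ` and scalars `cᵢ ∈ ℂ`. -/
noncomputable def waringRank {σ : Type*} [Fintype σ] (d : ℕ) (F : MvPolynomial σ ℂ) : ℕ :=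
  sInf {r : ℕ | ∃ (c : Fin r → ℂ) (v : Fin r → σ → ℂ),
    F = ∑ i, c i • (∑ j, v i j • MvPolynomial.X j) ^ d}

variable {σ : Type*}

lemma mderiv_monomial (m k : σ →₀ ℕ) (c : ℂ) :
    mderiv m (monomial k c) =
      monomial (k - m) (c * ∏ i ∈ m.support, (Nat.descFactorial (k i) (m i) : ℂ)) := by
  rw [mderiv, MvPolynomial.sum_monomial_eq (by simp)]

lemma mderiv_add (m : σ →₀ ℕ) (F G : MvPolynomial σ ℂ) :
    mderiv m (F + G) = mderiv m F + mderiv m G := by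
  classical
  rw [mderiv, AddMonoidAlgebra.coeff_add]
  apply Finsupp.sum_add_index <;> intros <;> simp [add_mul]

lemma mderiv_smul (m : σ →₀ ℕ) (a : ℂ) (F : MvPolynomial σ ℂ) :
    mderiv m (a • F) = a • mderiv m F := by
  unfold mderiv
  rw [AddMonoidAlgebra.coeff_smul, Finsupp.sum_smul_index' (by simp), Finsupp.smul_sum]
  simp [mul_assoc, MvPolynomial.smul_monomial]

lemma mderiv_zero (F : MvPolynomial σ ℂ) : mderiv 0 F = F := by
  simp [mderiv, MvPolynomial.sum_def]

lemma mderiv_single_one (j : σ) (F : MvPolynomial σ ℂ) :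
    mderiv (Finsupp.single j 1) F = pderiv j F := by
  induction F using MvPolynomial.induction_on' with
  | add p q hp hq => rw [mderiv_add, hp, hq, map_add]
  | monomial k c =>
    rw [mderiv_monomial, pderiv_monomial]
    simp

lemma mderiv_mderiv (m m' : σ →₀ ℕ) (F : MvPolynomial σ ℂ) :
    mderiv m (mderiv m' F) = mderiv (m' + m) F := by
  classical
  induction F using MvPolynomial.induction_on' with
  | add p q hp hq => rw [mderiv_add, mderiv_add, mderiv_add, hp, hq]
  | monomial k c =>
    rw [mderiv_monomial, mderiv_monomial, mderiv_monomial, tsub_tsub, mul_assoc]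
    congr 2
    set u := m'.support ∪ m.support
    have extend : ∀ (t : Finset σ) (n : σ →₀ ℕ) (g : σ → ℕ), t ⊆ u → (∀ i ∉ t, n i = 0) →
        ∏ i ∈ t, ((g i).descFactorial (n i) : ℂ) = ∏ i ∈ u, ((g i).descFactorial (n i) : ℂ) :=
      fun t n g htu hn => Finset.prod_subset htu fun i _ hi => by simp [hn i hi]
    rw [extend _ m' k Finset.subset_union_left (fun i => Finsupp.notMem_support_iff.mp),
      extend _ m ⇑(k - m') Finset.subset_union_right (fun i => Finsupp.notMem_support_iff.mp),
      extend _ (m' + m) k Finsupp.support_add (fun i => Finsupp.notMem_support_iff.mp),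
      ← Finset.prod_mul_distrib]
    refine Finset.prod_congr rfl fun i _ => ?_
    rw [Finsupp.add_apply, Finsupp.tsub_apply,
      ← Nat.descFactorial_mul_descFactorial (Nat.le_add_right (m' i) (m i)),
      Nat.add_sub_cancel_left]
    push_cast
    ring

lemma diffOp_monomial (m : σ →₀ ℕ) (c : ℂ) (F : MvPolynomial σ ℂ) :
    diffOp (monomial m c) F = c • mderiv m F := by
  rw [diffOp, MvPolynomial.sum_monomial_eq (by simp)]

lemma diffOp_zero_left (F : MvPolynomial σ ℂ) : diffOp 0 F = 0 := by
  simp [diffOp]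

lemma diffOp_add_left (Θ Ψ F : MvPolynomial σ ℂ) :
    diffOp (Θ + Ψ) F = diffOp Θ F + diffOp Ψ F := by
  classical
  rw [diffOp, AddMonoidAlgebra.coeff_add]
  apply Finsupp.sum_add_index <;> intros <;> simp [add_smul]

lemma diffOp_smul_left (a : ℂ) (Θ F : MvPolynomial σ ℂ) :
    diffOp (a • Θ) F = a • diffOp Θ F := by
  rw [diffOp, AddMonoidAlgebra.coeff_smul, Finsupp.sum_smul_index' (by simp), diffOp,
    Finsupp.smul_sum]
  simp [mul_smul]

lemma diffOp_add_right (Θ F G : MvPolynomial σ ℂ) :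
    diffOp Θ (F + G) = diffOp Θ F + diffOp Θ G := by
  simp only [diffOp, mderiv_add, smul_add, Finsupp.sum_add]

lemma diffOp_smul_right (Θ : MvPolynomial σ ℂ) (a : ℂ) (F : MvPolynomial σ ℂ) :
    diffOp Θ (a • F) = a • diffOp Θ F := by
  simp only [diffOp, mderiv_smul, Finsupp.smul_sum, smul_comm a]

noncomputable def diffOpₗ (Θ : MvPolynomial σ ℂ) : MvPolynomial σ ℂ →ₗ[ℂ] MvPolynomial σ ℂ where
  toFun := diffOp Θ
  map_add' := diffOp_add_right Θ
  map_smul' := diffOp_smul_right Θ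

@[simp] lemma diffOpₗ_apply (Θ F : MvPolynomial σ ℂ) : diffOpₗ Θ F = diffOp Θ F := rfl

lemma diffOp_mul (Θ Ψ F : MvPolynomial σ ℂ) :
    diffOp (Θ * Ψ) F = diffOp Θ (diffOp Ψ F) := by
  induction Θ using MvPolynomial.induction_on' with
  | add p q hp hq => rw [add_mul, diffOp_add_left, diffOp_add_left, hp, hq]
  | monomial m c =>
    induction Ψ using MvPolynomial.induction_on' with
    | add p q hp hq => rw [mul_add, diffOp_add_left, hp, hq, diffOp_add_left, diffOp_add_right]
    | monomial m' c' =>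
      rw [monomial_mul, diffOp_monomial, diffOp_monomial, diffOp_monomial, mderiv_smul,
        mderiv_mderiv, add_comm m' m, smul_smul, mul_comm c c']

lemma diffOp_comm (Θ Ψ F : MvPolynomial σ ℂ) :
    diffOp Θ (diffOp Ψ F) = diffOp Ψ (diffOp Θ F) := by
  rw [← diffOp_mul, mul_comm, diffOp_mul]

lemma diffOp_C (a : ℂ) (F : MvPolynomial σ ℂ) : diffOp (C a) F = a • F := by
  rw [← monomial_zero', diffOp_monomial, mderiv_zero]

lemma diffOp_X (j : σ) (F : MvPolynomial σ ℂ) : diffOp (X j) F = pderiv j F := by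
  rw [X, diffOp_monomial, one_smul, mderiv_single_one]

lemma mem_span_X_of_isHomogeneous_one {α : MvPolynomial σ ℂ} (hα : α.IsHomogeneous 1) :
    α ∈ Submodule.span ℂ (Set.range X) := by
  rwa [← homogeneousSubmodule_one_eq_span_X, mem_homogeneousSubmodule]

lemma diffOp_mul_of_isHomogeneous_one {α : MvPolynomial σ ℂ} (hα : α.IsHomogeneous 1)
    (F G : MvPolynomial σ ℂ) : diffOp α (F * G) = F * diffOp α G + G * diffOp α F := by
  replace hα := mem_span_X_of_isHomogeneous_one hα
  induction hα using Submodule.span_induction with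
  | mem _ hX =>
    obtain ⟨j, rfl⟩ := hX
    simp only [diffOp_X, Derivation.leibniz, smul_eq_mul]
  | zero => simp [diffOp_zero_left]
  | add β γ _ _ hβ hγ => rw [diffOp_add_left, diffOp_add_left, diffOp_add_left, hβ, hγ]; ring
  | smul a β _ hβ => rw [diffOp_smul_left, diffOp_smul_left, diffOp_smul_left, hβ, smul_add,
      mul_smul_comm, mul_smul_comm]

noncomputable def diffOpDerivation {α : MvPolynomial σ ℂ} (hα : α.IsHomogeneous 1) :
    Derivation ℂ (MvPolynomial σ ℂ) (MvPolynomial σ ℂ) :=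
  Derivation.mk' (diffOpₗ α) (diffOp_mul_of_isHomogeneous_one hα)

lemma isHomogeneous_diffOp {α F : MvPolynomial σ ℂ} {n : ℕ} (hα : α.IsHomogeneous 1)
    (hF : F.IsHomogeneous n) : (diffOp α F).IsHomogeneous (n - 1) := by
  rw [← mem_homogeneousSubmodule]
  replace hα := mem_span_X_of_isHomogeneous_one hα
  induction hα using Submodule.span_induction with
  | mem _ hX =>
    obtain ⟨j, rfl⟩ := hX
    rw [diffOp_X, mem_homogeneousSubmodule]
    exact hF.pderiv
  | zero => rw [diffOp_zero_left]; exact Submodule.zero_mem _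
  | add β γ _ _ hβ hγ => rw [diffOp_add_left]; exact Submodule.add_mem _ hβ hγ
  | smul a β _ hβ => rw [diffOp_smul_left]; exact Submodule.smul_mem _ a hβ

lemma diffOp_eq_C_of_isHomogeneous_one {α ℓ : MvPolynomial σ ℂ} (hα : α.IsHomogeneous 1)
    (hℓ : ℓ.IsHomogeneous 1) : diffOp α ℓ = C (coeff 0 (diffOp α ℓ)) :=
  totalDegree_eq_zero_iff_eq_C.mp
    ((totalDegree_zero_iff_isHomogeneous _).mpr (isHomogeneous_diffOp hα hℓ))

lemma diffOp_pow_of_isHomogeneous_one {α ℓ : MvPolynomial σ ℂ} (hα : α.IsHomogeneous 1)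
    (hℓ : ℓ.IsHomogeneous 1) (k : ℕ) :
    diffOp α (ℓ ^ k) = (k * coeff 0 (diffOp α ℓ)) • ℓ ^ (k - 1) := by
  have h : diffOp α (ℓ ^ k) = k • ℓ ^ (k - 1) • diffOp α ℓ :=
    (diffOpDerivation hα).leibniz_pow ℓ k
  rw [h, diffOp_eq_C_of_isHomogeneous_one hα hℓ, coeff_zero_C, smul_eq_mul, mul_comm,
    ← smul_eq_C_mul, ← Nat.cast_smul_eq_nsmul ℂ, smul_smul]

lemma diffOp_mem_of_forall_pderiv_mem {W : Submodule ℂ (MvPolynomial σ ℂ)}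
    (hW : ∀ j, ∀ G ∈ W, pderiv j G ∈ W) (Θ : MvPolynomial σ ℂ) {G : MvPolynomial σ ℂ}
    (hG : G ∈ W) : diffOp Θ G ∈ W := by
  induction Θ using MvPolynomial.induction_on generalizing G with
  | C a => rw [diffOp_C]; exact W.smul_mem a hG
  | add p q hp hq => rw [diffOp_add_left]; exact W.add_mem (hp hG) (hq hG)
  | mul_X p j hp => rw [diffOp_mul, diffOp_X]; exact hp (hW j G hG)

/-- `Diff(F)`; `apolarLength F` is its `finrank` by `rfl`. -/
noncomputable def diffSpace (F : MvPolynomial σ ℂ) : Submodule ℂ (MvPolynomial σ ℂ) :=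
  Submodule.span ℂ (Set.range fun Θ => diffOp Θ F)

lemma diffSpace_diffOp (α F : MvPolynomial σ ℂ) :
    diffSpace (diffOp α F) = (diffSpace F).map (diffOpₗ α) := by
  rw [diffSpace, diffSpace, Submodule.map_span, ← Set.range_comp]
  congr 2 with Θ : 1
  exact diffOp_comm Θ α F

lemma diffSpace_le {W : Submodule ℂ (MvPolynomial σ ℂ)}
    (hW : ∀ Θ, ∀ G ∈ W, diffOp Θ G ∈ W) {F : MvPolynomial σ ℂ} (hF : F ∈ W) : diffSpace F ≤ W :=
  Submodule.span_le.mpr (Set.range_subset_iff.mpr fun Θ => hW Θ F hF)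

section LinearAlgebra

variable {K V : Type*} [DivisionRing K] [AddCommGroup V] [Module K V]

lemma finrank_span_le_ncard {s : Set V} (hs : s.Finite) :
    Module.finrank K (Submodule.span K s) ≤ s.ncard := by
  have := hs.fintype
  rw [Set.ncard_eq_toFinset_card']
  exact finrank_span_le_card s

lemma Submodule.finrank_map_add_finrank_ker_inf (f : V →ₗ[K] V) (p : Submodule K V)
    [FiniteDimensional K p] :
    Module.finrank K (p.map f) + Module.finrank K (LinearMap.ker f ⊓ p : Submodule K V) =
      Module.finrank K p := by
  have h := LinearMap.finrank_range_add_finrank_ker (f.domRestrict p)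
  rw [LinearMap.range_domRestrict, LinearMap.ker_domRestrict] at h
  rwa [← (Submodule.comapSubtypeEquivOfLe (inf_le_right : LinearMap.ker f ⊓ p ≤ p)).finrank_eq,
    Submodule.comap_inf, Submodule.comap_subtype_self, inf_top_eq]

lemma Submodule.finrank_add_finrank_map_le (f : V →ₗ[K] V) {p q : Submodule K V} (hpq : p ≤ q)
    [FiniteDimensional K q] :
    Module.finrank K p + Module.finrank K (q.map f) ≤
      Module.finrank K q + Module.finrank K (p.map f) := by
  have := Submodule.finiteDimensional_of_le hpq
  have hp := p.finrank_map_add_finrank_ker_inf f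
  have hq := q.finrank_map_add_finrank_ker_inf f
  have hker := Submodule.finrank_mono (inf_le_inf_left (LinearMap.ker f) hpq)
  omega

end LinearAlgebra

section PowersSpan

variable {ι : Type*} (ℓ : ι → MvPolynomial σ ℂ) (S : Set ι) (d : ℕ)

noncomputable def powersSpan : Submodule ℂ (MvPolynomial σ ℂ) :=
  Submodule.span ℂ (Set.image2 (fun i k => ℓ i ^ k) S (Set.Iio d))

variable {ℓ S d}

lemma pow_mem_powersSpan {i : ι} (hi : i ∈ S) {k : ℕ} (hk : k < d) :
    ℓ i ^ k ∈ powersSpan ℓ S d :=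
  Submodule.subset_span (Set.mem_image2_of_mem hi hk)

lemma finiteDimensional_powersSpan (hS : S.Finite) : FiniteDimensional ℂ (powersSpan ℓ S d) :=
  FiniteDimensional.span_of_finite ℂ (hS.image2 _ (Set.finite_Iio d))

lemma diffOp_mem_powersSpan (hℓ : ∀ i, (ℓ i).IsHomogeneous 1) (Θ : MvPolynomial σ ℂ)
    {G : MvPolynomial σ ℂ} (hG : G ∈ powersSpan ℓ S d) : diffOp Θ G ∈ powersSpan ℓ S d := by
  refine diffOp_mem_of_forall_pderiv_mem (fun j H hH => ?_) Θ hG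
  have hX : powersSpan ℓ S d ≤ (powersSpan ℓ S d).comap (diffOpₗ (X j)) := by
    refine Submodule.span_le.mpr ?_
    rintro _ ⟨i, hi, k, hk, rfl⟩
    rw [SetLike.mem_coe, Submodule.mem_comap, diffOpₗ_apply,
      diffOp_pow_of_isHomogeneous_one (isHomogeneous_X ℂ j) (hℓ i)]
    exact Submodule.smul_mem _ _ (pow_mem_powersSpan hi (lt_of_le_of_lt (Nat.sub_le k 1) hk))
  rw [← diffOp_X]
  exact hX hH

variable {α : MvPolynomial σ ℂ}

lemma diffOp_pow_mem_powersSpan (hα : α.IsHomogeneous 1) {i : ι} (hℓ : (ℓ i).IsHomogeneous 1)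
    (hi : diffOp α (ℓ i) ≠ 0 → i ∈ S) : diffOp α (ℓ i ^ d) ∈ powersSpan ℓ S d := by
  rw [diffOp_pow_of_isHomogeneous_one hα hℓ]
  by_cases hα0 : diffOp α (ℓ i) = 0
  · simp [hα0]
  rcases d with _ | d
  · simp
  · exact Submodule.smul_mem _ _ (pow_mem_powersSpan (hi hα0) (Nat.lt_succ_self d))

lemma powersSpan_le_map_sup (hα : α.IsHomogeneous 1) (hℓ : ∀ i, (ℓ i).IsHomogeneous 1)
    (hS : ∀ i ∈ S, diffOp α (ℓ i) ≠ 0) :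
    powersSpan ℓ S d ≤
      (powersSpan ℓ S d).map (diffOpₗ α) ⊔ Submodule.span ℂ ((fun i => ℓ i ^ (d - 1)) '' S) := by
  refine Submodule.span_le.mpr ?_
  rintro _ ⟨i, hi, k, hk : k < d, rfl⟩
  rcases Nat.lt_or_ge (k + 1) d with hk1 | hk1
  · refine Submodule.mem_sup_left ?_
    have hs : coeff 0 (diffOp α (ℓ i)) ≠ 0 := fun h0 =>
      hS i hi (by rw [diffOp_eq_C_of_isHomogeneous_one hα (hℓ i), h0, C_0])
    have hunit : ((k + 1 : ℕ) * coeff 0 (diffOp α (ℓ i))) ≠ 0 :=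
      mul_ne_zero (Nat.cast_ne_zero.mpr k.succ_ne_zero) hs
    have h := diffOp_pow_of_isHomogeneous_one hα (hℓ i) (k + 1)
    rw [Nat.add_sub_cancel] at h
    show ℓ i ^ k ∈ _
    rw [← inv_smul_smul₀ hunit (ℓ i ^ k), ← h]
    exact Submodule.smul_mem _ _ (Submodule.mem_map_of_mem (pow_mem_powersSpan hi hk1))
  · refine Submodule.mem_sup_right (Submodule.subset_span ⟨i, hi, ?_⟩)
    rw [show d - 1 = k by omega]

lemma finrank_powersSpan_le (hα : α.IsHomogeneous 1) (hℓ : ∀ i, (ℓ i).IsHomogeneous 1)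
    (hS : ∀ i ∈ S, diffOp α (ℓ i) ≠ 0) (hSfin : S.Finite) :
    Module.finrank ℂ (powersSpan ℓ S d) ≤
      Module.finrank ℂ ((powersSpan ℓ S d).map (diffOpₗ α)) + S.ncard := by
  have := finiteDimensional_powersSpan (ℓ := ℓ) (d := d) hSfin
  have := FiniteDimensional.span_of_finite ℂ (hSfin.image fun i => ℓ i ^ (d - 1))
  calc _ ≤ _ := Submodule.finrank_mono (powersSpan_le_map_sup hα hℓ hS)
    _ ≤ _ := Submodule.finrank_add_le_finrank_add_finrank _ _
    _ ≤ _ := Nat.add_le_add_left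
      ((finrank_span_le_ncard (hSfin.image _)).trans (Set.ncard_image_le hSfin)) _

end PowersSpan

theorem stmt6_general (n d : ℕ) (F : MvPolynomial (Fin n) ℂ)
    (α : MvPolynomial (Fin n) ℂ) (hα : α.IsHomogeneous 1)
    (r : ℕ) (c : Fin r → ℂ) (ℓ : Fin r → MvPolynomial (Fin n) ℂ)
    (hℓ : ∀ i, (ℓ i).IsHomogeneous 1)
    (hFsum : F = ∑ i, c i • ℓ i ^ d) :
    apolarLength (diffOp α F) - apolarLength (diffOp (α ^ 2) F)
      ≤ Set.ncard {i : Fin r | diffOp α (ℓ i) ≠ 0} := by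
  set S := {i : Fin r | diffOp α (ℓ i) ≠ 0}
  set W := powersSpan ℓ S d
  have : FiniteDimensional ℂ W := finiteDimensional_powersSpan S.toFinite
  have hG : diffOp α F ∈ W := by
    rw [hFsum, ← diffOpₗ_apply, map_sum]
    refine Submodule.sum_mem _ fun i _ => ?_
    rw [map_smul]
    exact Submodule.smul_mem _ _ (diffOp_pow_mem_powersSpan hα (hℓ i) id)
  have hdefect := Submodule.finrank_add_finrank_map_le (diffOpₗ α)
    (diffSpace_le (fun Θ _ => diffOp_mem_powersSpan hℓ Θ) hG)
  have hW := finrank_powersSpan_le (S := S) (d := d) hα hℓ (fun _ => id) S.toFinite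
  have hα2 : diffOp (α ^ 2) F = diffOp α (diffOp α F) := by rw [sq, diffOp_mul]
  change Module.finrank ℂ (diffSpace _) - Module.finrank ℂ (diffSpace _) ≤ _
  rw [hα2, diffSpace_diffOp α (diffOp α F)]
  omega

/-- If `F = ∑ cᵢ ℓᵢ^d` with the `ℓᵢ` pairwise non-proportional nonzero linear forms,
then at least `al(α∘F) − al(α²∘F)` of the `ℓᵢ` satisfy `α∘ℓᵢ ≠ 0`, i.e. at least that
many of the points `[ℓᵢ]` lie off the hyperplane defined by `α`. -/
theorem stmt6 (n d : ℕ) (F : MvPolynomial (Fin n) ℂ) (hF : F ≠ 0)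
    (hFd : F.IsHomogeneous d)
    (α : MvPolynomial (Fin n) ℂ) (hα : α.IsHomogeneous 1)
    (r : ℕ) (c : Fin r → ℂ) (ℓ : Fin r → MvPolynomial (Fin n) ℂ)
    (hℓ : ∀ i, (ℓ i).IsHomogeneous 1) (hℓ0 : ∀ i, ℓ i ≠ 0)
    (hprop : ∀ i j, i ≠ j → ∀ t : ℂ, ℓ i ≠ t • ℓ j)
    (hFsum : F = ∑ i, c i • ℓ i ^ d) :
    apolarLength (diffOp α F) - apolarLength (diffOp (α ^ 2) F)
      ≤ Set.ncard {i : Fin r | diffOp α (ℓ i) ≠ 0} :=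
  stmt6_general n d F α hα r c ℓ hℓ hFsum
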